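/- Let G be a finite simple undirected graph, let v be a vertex of G, and let H_v be the auxiliary graph of v. If the minimum size of a vertex cover of H_v equals 1, then there exists a solution S (a minimum-size modulator of G) with v ∉ S. -/

import Mathlib

variable {V : Type*}

/-- The graph obtained from `G` by deleting the vertex set `S`
(deleted vertices become isolated, which does not affect cluster-ness of the rest). -/
def SimpleGraph.deleteSet (G : SimpleGraph V) (S : Set V) : SimpleGraph V where
  Adj a b := G.Adj a b ∧ a ∉ S ∧ b ∉ S
  symm := by
    constructor
    intro a b h
    exact ⟨h.1.symm, h.2.2, h.2.1⟩
  loopless := by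
    constructor
    intro a h
    exact G.irrefl h.1

/-- `(u, v, w)` is a `P₃` in `G`: an induced path on the three distinct vertices
`u`, `v`, `w` with edges `uv` and `vw` and non-edge `uw`. -/
def IsP3 (G : SimpleGraph V) (u v w : V) : Prop :=
  G.Adj u v ∧ G.Adj v w ∧ ¬ G.Adj u w ∧ u ≠ w

/-- A cluster graph is a graph containing no `P₃`. -/
def IsClusterGraph (G : SimpleGraph V) : Prop :=
  ∀ u v w : V, ¬ IsP3 G u v w

/-- `S` is a modulator of `G`: deleting `S` from `G` yields a cluster graph. -/
def IsModulator (G : SimpleGraph V) (S : Set V) : Prop :=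
  IsClusterGraph (G.deleteSet S)

/-- A solution is a modulator of minimum cardinality. -/
def IsSolution (G : SimpleGraph V) (S : Set V) : Prop :=
  IsModulator G S ∧ ∀ T : Set V, IsModulator G T → S.ncard ≤ T.ncard

/-- `N1 G v` is the neighbourhood of `v` in `G`. -/
def N1 (G : SimpleGraph V) (v : V) : Set V := G.neighborSet v

/-- `N2 G v = N_G(N_G[v])` is the set of vertices at distance exactly `2` from `v`. -/
def N2 (G : SimpleGraph V) (v : V) : Set V :=
  {w | w ≠ v ∧ ¬ G.Adj v w ∧ ∃ u, G.Adj v u ∧ G.Adj u w}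

/-- Adjacency in the auxiliary graph `H_v`: non-edges of `G` inside `N1`,
and edges of `G` between `N1` and `N2`. -/
def HvAdj (G : SimpleGraph V) (v a b : V) : Prop :=
  (a ∈ N1 G v ∧ b ∈ N1 G v ∧ a ≠ b ∧ ¬ G.Adj a b) ∨
  (a ∈ N1 G v ∧ b ∈ N2 G v ∧ G.Adj a b) ∨
  (b ∈ N1 G v ∧ a ∈ N2 G v ∧ G.Adj a b)

/-- `X` is a vertex cover of the auxiliary graph `H_v`: a subset of
`V(H_v) = N1 ∪ N2` meeting every edge of `H_v`. -/
def IsVCHv (G : SimpleGraph V) (v : V) (X : Set V) : Prop :=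
  X ⊆ N1 G v ∪ N2 G v ∧ ∀ a b : V, HvAdj G v a b → a ∈ X ∨ b ∈ X

/-- `X` is a vertex cover of the graph `H`. -/
def IsVC (H : SimpleGraph V) (X : Set V) : Prop :=
  ∀ a b : V, H.Adj a b → a ∈ X ∨ b ∈ X

/-- The connected component of `v` in `G` is a clique. -/
def ComponentIsClique (G : SimpleGraph V) (v : V) : Prop :=
  ∀ u w : V, G.Reachable v u → G.Reachable v w → u ≠ w → G.Adj u w

/-- The auxiliary graph `H_v` is an `s`-skein with seagulls `(x i, y i, z i)`:
it is the disjoint union of `s` seagulls (paths on three vertices with middle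
vertex `y i ∈ N1` and endpoints `x i, z i ∈ N2`) and isolated vertices. -/
def IsSkein (G : SimpleGraph V) (v : V) (s : ℕ) (x y z : Fin s → V) : Prop :=
  (∀ i, x i ∈ N2 G v ∧ y i ∈ N1 G v ∧ z i ∈ N2 G v) ∧
  (∀ i, x i ≠ z i) ∧
  (∀ i j, i ≠ j → ({x i, y i, z i} ∩ {x j, y j, z j} : Set V) = ∅) ∧
  (∀ i, HvAdj G v (x i) (y i) ∧ HvAdj G v (y i) (z i) ∧ ¬ HvAdj G v (x i) (z i)) ∧
  (∀ a b : V, HvAdj G v a b →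
    ∃ i, (a = x i ∧ b = y i) ∨ (a = y i ∧ b = x i) ∨
         (a = y i ∧ b = z i) ∨ (a = z i ∧ b = y i))

/-! If `{c}` covers `H_v`, then `K = N[v] \ {c}` is a clique of `G` (a non-edge inside `N1` is an
edge of `H_v`) and, apart from `c`, no edge of `G` leaves `K` (an edge from `N1` to `N2` is an edge
of `H_v`). Hence, once `c` is deleted, `v` lies in a component that is a clique, and swapping `v` for
`c` in a solution containing `v` yields a modulator that is no larger. -/

theorem isModulator_univ (G : SimpleGraph V) : IsModulator G Set.univ :=
  fun u _ _ h ↦ h.1.2.1 (Set.mem_univ u)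

theorem exists_isSolution (G : SimpleGraph V) : ∃ S : Set V, IsSolution G S := by
  obtain ⟨S, hS, hmin⟩ :=
    exists_minimalFor_of_wellFoundedLT (IsModulator G) Set.ncard ⟨_, isModulator_univ G⟩
  exact ⟨S, hS, fun T hT ↦ (le_total _ _).elim id (hmin hT)⟩

theorem Set.ncard_insert_sdiff_singleton_le {α : Type*} {s : Set α} {a b : α}
    (ha : a ∈ s) (hab : b ≠ a) : (insert b (s \ {a})).ncard ≤ s.ncard := by
  by_cases hb : b ∈ s
  · rw [Set.insert_eq_of_mem (Set.mem_sdiff_singleton.mpr ⟨hb, hab⟩)]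
    exact Set.ncard_sdiff_singleton_le s a
  · exact (Set.ncard_exchange hb ha).le

section SingletonCover

variable {G : SimpleGraph V} {v c : V}

theorem IsVCHv.ne_of_singleton (hc : IsVCHv G v {c}) : c ≠ v := by
  rintro rfl
  rcases hc.1 rfl with h | h
  · exact G.irrefl h
  · exact h.1 rfl

theorem IsVCHv.isClique_insert_sdiff_singleton (hc : IsVCHv G v {c}) :
    G.IsClique (insert v (N1 G v \ {c})) := by
  rintro u (rfl | ⟨hu, huc⟩) w (rfl | ⟨hw, hwc⟩) huw
  · exact absurd rfl huw
  · exact hw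
  · exact hu.symm
  · by_contra hnadj
    exact (hc.2 u w (Or.inl ⟨hu, hw, huw, hnadj⟩)).elim huc hwc

theorem IsVCHv.mem_insert_sdiff_singleton_of_adj (hc : IsVCHv G v {c}) {u w : V}
    (hu : u ∈ insert v (N1 G v \ {c})) (huw : G.Adj u w) (hwc : w ≠ c) :
    w ∈ insert v (N1 G v \ {c}) := by
  rcases hu with rfl | ⟨hu, huc⟩
  · exact Or.inr ⟨huw, hwc⟩
  by_cases hwv : w = v
  · exact Or.inl hwv
  by_cases hvw : G.Adj v w
  · exact Or.inr ⟨hvw, hwc⟩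
  have hw : w ∈ N2 G v := ⟨hwv, hvw, u, hu, huw⟩
  exact (hc.2 u w (Or.inr (Or.inl ⟨hu, hw, huw⟩))).elim (absurd · huc) (absurd · hwc)

theorem IsModulator.insert_sdiff_singleton (hc : IsVCHv G v {c}) {S : Set V}
    (hS : IsModulator G S) : IsModulator G (insert c (S \ {v})) := by
  rintro a b d ⟨⟨hab, ha, hb⟩, ⟨hbd, -, hd⟩, hnad, had⟩
  have hac : a ≠ c := fun h ↦ ha (Or.inl h)
  have hbc : b ≠ c := fun h ↦ hb (Or.inl h)
  have hdc : d ≠ c := fun h ↦ hd (Or.inl h)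
  by_cases hv : a = v ∨ b = v ∨ d = v
  · have hbK : b ∈ insert v (N1 G v \ {c}) := by
      rcases hv with rfl | rfl | rfl
      · exact hc.mem_insert_sdiff_singleton_of_adj (Or.inl rfl) hab hbc
      · exact Or.inl rfl
      · exact hc.mem_insert_sdiff_singleton_of_adj (Or.inl rfl) hbd.symm hbc
    have haK := hc.mem_insert_sdiff_singleton_of_adj hbK hab.symm hac
    have hdK := hc.mem_insert_sdiff_singleton_of_adj hbK hbd hdc
    exact hnad ⟨hc.isClique_insert_sdiff_singleton haK hdK had, ha, hd⟩
  · push Not at hv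
    have notMem {x : V} (hx : x ∉ insert c (S \ {v})) (hxv : x ≠ v) : x ∉ S :=
      fun h ↦ hx (Or.inr ⟨h, hxv⟩)
    have ha' := notMem ha hv.1
    have hb' := notMem hb hv.2.1
    have hd' := notMem hd hv.2.2
    exact hS a b d ⟨⟨hab, ha', hb'⟩, ⟨hbd, hb', hd'⟩, fun h ↦ hnad ⟨h.1, ha, hd⟩, had⟩

theorem IsSolution.insert_sdiff_singleton (hc : IsVCHv G v {c}) {S : Set V}
    (hS : IsSolution G S) (hvS : v ∈ S) : IsSolution G (insert c (S \ {v})) :=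
  ⟨hS.1.insert_sdiff_singleton hc, fun T hT ↦
    (Set.ncard_insert_sdiff_singleton_le hvS hc.ne_of_singleton).trans (hS.2 T hT)⟩

end SingletonCover

theorem stmt_7_general (G : SimpleGraph V) (v : V)
    (hvc1 : ∃ X : Set V, IsVCHv G v X ∧ X.ncard = 1) :
    ∃ S : Set V, IsSolution G S ∧ v ∉ S := by
  obtain ⟨S, hS⟩ := exists_isSolution G
  by_cases hvS : v ∈ S
  · obtain ⟨X, hX, hX1⟩ := hvc1
    obtain ⟨c, rfl⟩ := Set.ncard_eq_one.mp hX1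
    refine ⟨insert c (S \ {v}), hS.insert_sdiff_singleton hX hvS, ?_⟩
    rintro (h | h)
    · exact hX.ne_of_singleton h.symm
    · exact h.2 rfl
  · exact ⟨S, hS, hvS⟩

/-- If `MinVC(H_v) = 1` then there is a solution not containing `v`. -/
theorem stmt_7 [Fintype V] (G : SimpleGraph V) (v : V)
    (hvc1 : ∃ X : Set V, IsVCHv G v X ∧ X.ncard = 1)
    (hmin : ∀ Y : Set V, IsVCHv G v Y → 1 ≤ Y.ncard) :
    ∃ S : Set V, IsSolution G S ∧ v ∉ S :=
  stmt_7_general G v hvc1
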